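/- Let K = (X, (→_a)_{a∈Σ}, ρ) be a Kripke structure over Σ and suppose some world x ∈ X satisfies φ_snake, i.e.: (i) there is y with (x,y) ∈ [[c a₁ b₂ d a₂ b₁ a₂ b₁ c]]; (ii) for every y with (x,y) ∈ [[Σ*{c}]], there exist i ≥ 0 and z with (y,z) ∈ [[(a₁b₂)^i d]], and there is no z with (y,z) ∈ [[L₀]]; (iii) for every y with (x,y) ∈ [[Σ*{d}]], there exist i ≥ 0 and z with (y,z) ∈ [[(a₂b₁)^i c]], and there is no z with (y,z) ∈ [[L₁]]. Then K contains a snake, i.e. there is a function σ: ℕ → X with (σ(p), σ(p+1)) ∈ →_{W(p)} for every p ∈ ℕ, where W is the snake word. -/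

import Mathlib

/-- The six-letter alphabet `Σ = {a₁, a₂, b₁, b₂, c, d}`. -/
inductive Letter where
  | a1 | a2 | b1 | b2 | c | d
deriving DecidableEq

instance instFintypeLetter : Fintype Letter :=
  ⟨{.a1, .a2, .b1, .b2, .c, .d}, by intro x; cases x <;> simp⟩

/-- `w^i`: the `i`-fold concatenation of the word `w`. -/
def wpow (w : List Letter) (i : ℕ) : List Letter :=
  (List.replicate i w).flatten

/-- Given a Kripke structure with transition relations `R a` for each letter `a`, the
relation `[[w]]` of a word `w`: the relational composition of the `R a` along `w`
(the identity for the empty word). -/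
def wordRel {X : Type} (R : Letter → X → X → Prop) : List Letter → X → X → Prop
  | [] => fun x y => x = y
  | a :: w => fun x z => ∃ y, R a x y ∧ wordRel R w y z

/-- `L₀ = {(a₁b₂)^i d (a₂b₁)^j c : i, j ≥ 0, j ≠ i+1}`. -/
def L0 : Set (List Letter) :=
  {w | ∃ i j : ℕ, j ≠ i + 1 ∧
    w = wpow [.a1, .b2] i ++ [.d] ++ wpow [.a2, .b1] j ++ [.c]}

/-- `L₁ = {(a₂b₁)^i c (a₁b₂)^j d : i, j ≥ 0, j ≠ i+1}`. -/
def L1 : Set (List Letter) :=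
  {w | ∃ i j : ℕ, j ≠ i + 1 ∧
    w = wpow [.a2, .b1] i ++ [.c] ++ wpow [.a1, .b2] j ++ [.d]}

/-- The `r`-th block `c (a₁b₂)^{2r+1} d (a₂b₁)^{2r+2}` of the snake word. -/
def snakeBlock (r : ℕ) : List Letter :=
  [.c] ++ wpow [.a1, .b2] (2 * r + 1) ++ [.d] ++ wpow [.a2, .b1] (2 * r + 2)

/-- The `(p+1)`-st letter of the infinite snake word
`W = c (a₁b₂)^1 d (a₂b₁)^2 c (a₁b₂)^3 d (a₂b₁)^4 c ⋯`
(the concatenation of the first `p+1` blocks has length `> p`, so the `getD` default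
is never used). -/
def snakeWord (p : ℕ) : Letter :=
  (((List.range (p + 1)).map snakeBlock).flatten).getD p .c

/-- A snake in a Kripke structure: an infinite path labeled by the snake word `W`. -/
def IsSnake {X : Type} (R : Letter → X → X → Prop) (σ : ℕ → X) : Prop :=
  ∀ p : ℕ, R (snakeWord p) (σ p) (σ (p + 1))

/-- `(K, x) ⊨ φ_snake`:
(i) `⟨c a₁ b₂ d (a₂b₁)² c⟩ true`;
(ii) `[Σ* c](⟨(a₁b₂)* d⟩ true ∧ [L₀] false)`;
(iii) `[Σ* d](⟨(a₂b₁)* c⟩ true ∧ [L₁] false)`. -/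
def PhiSnake {X : Type} (R : Letter → X → X → Prop) (x : X) : Prop :=
  (∃ y, wordRel R [.c, .a1, .b2, .d, .a2, .b1, .a2, .b1, .c] x y) ∧
  (∀ y, (∃ u : List Letter, wordRel R (u ++ [.c]) x y) →
    (∃ i : ℕ, ∃ z, wordRel R (wpow [.a1, .b2] i ++ [.d]) y z) ∧
    ¬ ∃ z, ∃ w ∈ L0, wordRel R w y z) ∧
  (∀ y, (∃ u : List Letter, wordRel R (u ++ [.d]) x y) →
    (∃ i : ℕ, ∃ z, wordRel R (wpow [.a2, .b1] i ++ [.c]) y z) ∧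
    ¬ ∃ z, ∃ w ∈ L1, wordRel R w y z)


/-! Let `Y r` be the world just before the `r`-th letter `c` of the snake word, so `Y 0 = x`.
Clause (i) gives a path `c (a₁b₂)¹ d` from `Y 0`. If `Y r` starts a path `c (a₁b₂)ⁿ d`, then
clause (iii) at its end continues it by some `(a₂b₁)ʲ c`, and `[L₀] false` at the world after the
first `c` forces `j = n + 1`; clause (ii) at the end of that continues it by some `(a₁b₂)ᵏ d`,
and `[L₁] false` forces `k = n + 2`. Hence `Y r` is linked to a world `Y (r + 1)` by the `r`-th
block `c (a₁b₂)ⁿ d (a₂b₁)ⁿ⁺¹` of the snake word (`n = 2r + 1`), and `Y (r + 1)` again starts a path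
`c (a₁b₂)ⁿ⁺² d`. Unfolding the chain of blocks letter by letter gives the snake. -/

theorem exists_seq_of_forall_exists {α : Type*} (Q : ℕ → α → Prop) (S : ℕ → α → α → Prop)
    {a : α} (ha : Q 0 a) (step : ∀ n y, Q n y → ∃ y', S n y y' ∧ Q (n + 1) y') :
    ∃ f : ℕ → α, f 0 = a ∧ ∀ n, S n (f n) (f (n + 1)) := by
  choose next hS hQ using step
  let g : ∀ n, {y // Q n y} := fun n => Nat.rec ⟨a, ha⟩ (fun n y => ⟨next n y y.2, hQ n y y.2⟩) n
  exact ⟨fun n => (g n).1, rfl, fun n => hS n (g n).1 (g n).2⟩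

section Words

variable {X : Type} {R : Letter → X → X → Prop}

theorem wordRel_append {u v : List Letter} {x z : X} :
    wordRel R (u ++ v) x z ↔ ∃ y, wordRel R u x y ∧ wordRel R v y z := by
  induction u generalizing x with
  | nil => simp [wordRel]
  | cons a u ih =>
    simp only [List.cons_append, wordRel, ih]
    exact ⟨fun ⟨y, hy, m, h1, h2⟩ => ⟨m, ⟨y, hy, h1⟩, h2⟩,
      fun ⟨m, ⟨y, hy, h1⟩, h2⟩ => ⟨y, hy, m, h1, h2⟩⟩

theorem wordRel.append {u v : List Letter} {x y z : X} (h₁ : wordRel R u x y)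
    (h₂ : wordRel R v y z) : wordRel R (u ++ v) x z :=
  wordRel_append.2 ⟨y, h₁, h₂⟩

end Words

section Blocks

variable (b : ℕ → List Letter)

theorem flatten_map_range_succ (n : ℕ) :
    ((List.range (n + 1)).map b).flatten = ((List.range n).map b).flatten ++ b n := by
  simp [List.range_succ]

theorem flatten_map_range_prefix {m n : ℕ} (hmn : m ≤ n) :
    ((List.range m).map b).flatten <+: ((List.range n).map b).flatten := by
  induction n, hmn using Nat.le_induction with
  | base => exact List.prefix_refl _
  | succ n _ ih => exact ih.trans (flatten_map_range_succ b n ▸ List.prefix_append _ _)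

variable {b}

theorem le_length_flatten_map_range (hb : ∀ n, b n ≠ []) (n : ℕ) :
    n ≤ ((List.range n).map b).flatten.length := by
  induction n with
  | zero => simp
  | succ n ih =>
    rw [flatten_map_range_succ, List.length_append]
    have := List.length_pos_iff.2 (hb n)
    omega

theorem exists_path_of_blocks {X : Type} {R : Letter → X → X → Prop} (hb : ∀ n, b n ≠ [])
    {Y : ℕ → X} (hY : ∀ n, wordRel R (b n) (Y n) (Y (n + 1))) :
    ∃ σ : ℕ → X, ∀ p,
      R ((((List.range (p + 1)).map b).flatten).getD p .c) (σ p) (σ (p + 1)) := by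
  set P : ℕ → List Letter := fun n => ((List.range n).map b).flatten
  have hlen (n : ℕ) : n ≤ (P n).length := le_length_flatten_map_range hb n
  have step : ∀ p y, (∃ n, p + 1 ≤ n ∧ wordRel R ((P n).drop p) y (Y n)) →
      ∃ y', R ((P (p + 1)).getD p .c) y y' ∧
        ∃ n, p + 1 + 1 ≤ n ∧ wordRel R ((P n).drop (p + 1)) y' (Y n) := by
    rintro p y ⟨n, hpn, hy⟩
    have hp : p < (P n).length := by have := hlen n; omega
    rw [List.drop_eq_getElem_cons hp] at hy
    obtain ⟨y', hstep, hrest⟩ := hy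
    refine ⟨y', ?_, n + 1, by omega, ?_⟩
    · have hp' : p < (P (p + 1)).length := hlen (p + 1)
      rwa [List.getD_eq_getElem _ _ hp', (flatten_map_range_prefix b hpn).getElem hp']
    · rw [show P (n + 1) = P n ++ b n from flatten_map_range_succ b n,
        List.drop_append_of_le_length hp]
      exact hrest.append (hY n)
  obtain ⟨σ, -, hσ⟩ := exists_seq_of_forall_exists _ _ ⟨1, le_rfl, by simpa [P] using hY 0⟩ step
  exact ⟨σ, hσ⟩

end Blocks

namespace PhiSnake

variable {X : Type} {R : Letter → X → X → Prop} {x : X}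

theorem exists_pow_a2b1_c (h : PhiSnake R x) {u : List Letter} {y z : X}
    (hy : wordRel R (u ++ [.c]) x y) {n : ℕ} (hz : wordRel R (wpow [.a1, .b2] n ++ [.d]) y z) :
    ∃ z', wordRel R (wpow [.a2, .b1] (n + 1) ++ [.c]) z z' := by
  obtain ⟨⟨j, z', hz'⟩, -⟩ :=
    h.2.2 z ⟨u ++ [.c] ++ wpow [.a1, .b2] n, by simpa using hy.append hz⟩
  obtain rfl : j = n + 1 := by
    by_contra hj
    exact (h.2.1 y ⟨u, hy⟩).2 ⟨z', _, ⟨n, j, hj, rfl⟩, by simpa using hz.append hz'⟩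
  exact ⟨z', hz'⟩

theorem exists_pow_a1b2_d (h : PhiSnake R x) {u : List Letter} {y z : X}
    (hy : wordRel R (u ++ [.d]) x y) {n : ℕ} (hz : wordRel R (wpow [.a2, .b1] n ++ [.c]) y z) :
    ∃ z', wordRel R (wpow [.a1, .b2] (n + 1) ++ [.d]) z z' := by
  obtain ⟨⟨j, z', hz'⟩, -⟩ :=
    h.2.1 z ⟨u ++ [.d] ++ wpow [.a2, .b1] n, by simpa using hy.append hz⟩
  obtain rfl : j = n + 1 := by
    by_contra hj
    exact (h.2.2 y ⟨u, hy⟩).2 ⟨z', _, ⟨n, j, hj, rfl⟩, by simpa using hz.append hz'⟩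
  exact ⟨z', hz'⟩

theorem exists_snakeBlock (h : PhiSnake R x) {u : List Letter} {v z : X}
    (hv : wordRel R u x v) {r : ℕ}
    (hz : wordRel R ([.c] ++ wpow [.a1, .b2] (2 * r + 1) ++ [.d]) v z) :
    ∃ v', wordRel R (snakeBlock r) v v' ∧
      ∃ z', wordRel R ([.c] ++ wpow [.a1, .b2] (2 * (r + 1) + 1) ++ [.d]) v' z' := by
  have ⟨y, hc, hy⟩ :
      ∃ y, R .c v y ∧ wordRel R (wpow [.a1, .b2] (2 * r + 1) ++ [Letter.d]) y z := hz
  have hxy : wordRel R (u ++ [.c]) x y := hv.append ⟨y, hc, rfl⟩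
  obtain ⟨z₁, hz₁⟩ := h.exists_pow_a2b1_c hxy hy
  obtain ⟨z₂, hz₂⟩ := h.exists_pow_a1b2_d (u := u ++ [.c] ++ wpow [.a1, .b2] (2 * r + 1))
    (by simpa using hxy.append hy) hz₁
  obtain ⟨v', hzv', z₁', hc', rfl⟩ := wordRel_append.1 hz₁
  exact ⟨v', hz.append hzv', z₂, _, hc', hz₂⟩

end PhiSnake

theorem snake_of_phiSnake_general {X : Type} (R : Letter → X → X → Prop)
    (x : X) (h : PhiSnake R x) :
    ∃ σ : ℕ → X, IsSnake R σ := by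
  obtain ⟨y, hy⟩ := h.1
  obtain ⟨z, hfirst, -⟩ := wordRel_append.1
    (show wordRel R (([.c] ++ wpow [.a1, .b2] 1 ++ [.d]) ++ [.a2, .b1, .a2, .b1, .c]) x y from hy)
  obtain ⟨Y, -, hY⟩ := exists_seq_of_forall_exists
    (fun r v => (∃ u, wordRel R u x v) ∧
      ∃ z, wordRel R ([.c] ++ wpow [.a1, .b2] (2 * r + 1) ++ [.d]) v z)
    (fun r v v' => wordRel R (snakeBlock r) v v') ⟨⟨[], rfl⟩, _, hfirst⟩
    fun r v ⟨⟨u, hv⟩, z, hz⟩ => by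
      obtain ⟨v', hb, hnext⟩ := h.exists_snakeBlock hv hz
      exact ⟨v', hb, ⟨_, hv.append hb⟩, hnext⟩
  exact exists_path_of_blocks (fun r => by simp [snakeBlock]) hY

/-- Every world satisfying `φ_snake` in a Kripke structure `K = (X, (→_a)_{a∈Σ}, ρ)`
is the source of a snake: an infinite path labeled by the snake word `W`. -/
theorem snake_of_phiSnake {X : Type} (R : Letter → X → X → Prop)
    {P : Type} (ρ : X → Set P) (x : X) (h : PhiSnake R x) :
    ∃ σ : ℕ → X, IsSnake R σ :=
  snake_of_phiSnake_general R x h
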